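/- arXiv:1611.01280 — 2 statements merged into one kernel-verified Lean document; each statement's English description precedes it below -/
import Mathlib

section
/- Let σ > 0, μ, r, γ, l ∈ ℝ with γ > 0. Define v(x) = [2l − 2(μ−r)x + σ²x² − 2x(1−x)(μ−r−σ²x)·γ/(1+γx)] / (σ²x²(1−x)²) + γ²/(1+γx)² on (0,1). Then there exists a polynomial p of degree at most 2 such that v(x) = p(x)/(σ²x²(1−x)²(1+γx)²) for all x ∈ (0,1); in particular, v has at most two zeros in (0,1) unless p ≡ 0. -/
/-!
Multiplying the numerator of the first term of `v` by `(1 + γ x)²` and adding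
`γ² σ² x² (1 - x)²` gives a quartic whose cubic and quartic terms cancel, so `v` is a quadratic
over the denominator `σ² x² (1 - x)² (1 + γ x)²`, which does not vanish on `(0, 1)`. A nonzero
quadratic has at most two roots.
-/

open Polynomial

namespace Polynomial

theorem finite_and_ncard_le_natDegree_of_forall_isRoot {R : Type*} [CommRing R] [IsDomain R]
    {p : R[X]} (hp : p ≠ 0) {s : Set R} (hs : ∀ x ∈ s, p.IsRoot x) :
    s.Finite ∧ s.ncard ≤ p.natDegree := by
  have hsub : s ⊆ p.rootSet R := fun x hx => by
    simpa [mem_rootSet, hp] using hs x hx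
  exact ⟨(p.rootSet_finite R).subset hsub,
    (Set.ncard_le_ncard hsub (p.rootSet_finite R)).trans (p.ncard_rootSet_le R)⟩

end Polynomial

section VNumerator

variable {K : Type*} [Field K]

noncomputable def vNumerator (σ μ r γ l : K) : K[X] :=
  C (2 * l) + C (4 * γ * l - 2 * (μ - r) * (1 + γ)) * X
    + C (2 * γ ^ 2 * l - 2 * (μ - r) * (γ + γ ^ 2) + σ ^ 2 * (1 + γ) ^ 2) * X ^ 2

theorem degree_vNumerator_le (σ μ r γ l : K) : (vNumerator σ μ r γ l).degree ≤ 2 := by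
  unfold vNumerator
  compute_degree

theorem v_formula_eq_eval_vNumerator_div {σ γ x : K} (μ r l : K) (hσ : σ ≠ 0) (hx₀ : x ≠ 0)
    (hx₁ : 1 - x ≠ 0) (hγx : 1 + γ * x ≠ 0) :
    (2 * l - 2 * (μ - r) * x + σ ^ 2 * x ^ 2
          - 2 * x * (1 - x) * (μ - r - σ ^ 2 * x) * (γ / (1 + γ * x)))
        / (σ ^ 2 * x ^ 2 * (1 - x) ^ 2) + γ ^ 2 / (1 + γ * x) ^ 2
      = (vNumerator σ μ r γ l).eval x / (σ ^ 2 * x ^ 2 * (1 - x) ^ 2 * (1 + γ * x) ^ 2) := by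
  simp only [vNumerator, eval_add, eval_mul, eval_pow, eval_C, eval_X]
  -- `field_simp` rewrites `γ * x` to `x * γ` before looking for nonvanishing hypotheses
  have hxγ : 1 + x * γ ≠ 0 := by rwa [mul_comm]
  field_simp
  ring

end VNumerator

theorem v_is_rational_with_quadratic_numerator (σ μ r γ l : ℝ) (hσ : 0 < σ) (hγ : 0 < γ)
    (v : ℝ → ℝ)
    (hv : ∀ x ∈ Set.Ioo (0:ℝ) 1,
      v x = (2 * l - 2 * (μ - r) * x + σ^2 * x^2
              - 2 * x * (1 - x) * (μ - r - σ^2 * x) * (γ / (1 + γ * x)))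
            / (σ^2 * x^2 * (1 - x)^2)
          + γ^2 / (1 + γ * x)^2) :
    ∃ p : Polynomial ℝ, p.degree ≤ 2 ∧
      (∀ x ∈ Set.Ioo (0:ℝ) 1,
        v x = p.eval x / (σ^2 * x^2 * (1 - x)^2 * (1 + γ * x)^2)) ∧
      (p ≠ 0 → {x ∈ Set.Ioo (0:ℝ) 1 | v x = 0}.Finite ∧
        {x ∈ Set.Ioo (0:ℝ) 1 | v x = 0}.ncard ≤ 2) := by
  set p := vNumerator σ μ r γ l
  have hdenom : ∀ x ∈ Set.Ioo (0:ℝ) 1, σ^2 * x^2 * (1 - x)^2 * (1 + γ * x)^2 ≠ 0 := by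
    rintro x ⟨hx₀, hx₁⟩
    have : 0 < 1 + γ * x := by positivity
    have : 0 < 1 - x := by linarith
    positivity
  have hrepr : ∀ x ∈ Set.Ioo (0:ℝ) 1,
      v x = p.eval x / (σ^2 * x^2 * (1 - x)^2 * (1 + γ * x)^2) := by
    intro x hx
    have hγx : 1 + γ * x ≠ 0 := by have := hx.1; positivity
    exact (hv x hx).trans (v_formula_eq_eval_vNumerator_div μ r l hσ.ne' hx.1.ne'
      (sub_ne_zero.2 hx.2.ne') hγx)
  refine ⟨p, degree_vNumerator_le σ μ r γ l, hrepr, fun hp => ?_⟩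
  have hroots : ∀ x ∈ {x ∈ Set.Ioo (0:ℝ) 1 | v x = 0}, p.IsRoot x := by
    rintro x ⟨hx, hvx⟩
    rw [hrepr x hx, div_eq_zero_iff] at hvx
    exact hvx.resolve_right (hdenom x hx)
  obtain ⟨hfin, hcard⟩ := finite_and_ncard_le_natDegree_of_forall_isRoot hp hroots
  exact ⟨hfin, hcard.trans (natDegree_le_of_degree_le (degree_vNumerator_le σ μ r γ l))⟩
end

section
/- In the one-sided Skorokhod problem: if w : [t_0, ∞) → ℝ is continuous with w(t_0) = a_0 and Y_t = w(t) + Z_t with Z continuous nondecreasing, Z_{t_0} = 0, Y_t ≥ a_0, and Z increases only when Y = a_0, then Z_t = −min_{s ∈ [t_0,t]} (w(s) − a_0) ∨ 0 = max_{s∈[t_0,t]} (a_0 − w(s))⁺. -/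
/-!
`Z t` dominates every `(a₀ - w s)⁺` with `s ≤ t`, because `w s + Z s = Y s ≥ a₀` and `Z` is
nondecreasing. Conversely, let `M` be any such upper bound. If `Z t > M`, then just after the last
time `x ≤ t` with `Z x ≤ M` we have `Y = w + Z > w + M ≥ a₀`, so `Z` is flat on `(x, t]`, and by
continuity `Z t = Z x ≤ M`. Hence `Z t` is the least upper bound.
-/

open Set

section Skorokhod

variable {t₀ a₀ t : ℝ} {w Z Y : ℝ → ℝ}

lemma skorokhod_mem_upperBounds (hZmono : MonotoneOn Z (Ici t₀)) (hZ0 : Z t₀ = 0)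
    (hY : ∀ t ∈ Ici t₀, Y t = w t + Z t) (hYge : ∀ t ∈ Ici t₀, a₀ ≤ Y t) (ht : t₀ ≤ t) :
    Z t ∈ upperBounds ((fun s => max (a₀ - w s) 0) '' Icc t₀ t) := by
  rintro _ ⟨s, ⟨hs₀, hst⟩, rfl⟩
  have hZs : Z s ≤ Z t := hZmono hs₀ ht hst
  have hYs : a₀ ≤ w s + Z s := hY s hs₀ ▸ hYge s hs₀
  have hZt : 0 ≤ Z t := hZ0 ▸ hZmono self_mem_Ici ht ht
  exact max_le (by linarith) hZt

lemma skorokhod_le_of_mem_upperBounds (hZcont : ContinuousOn Z (Ici t₀)) (hZ0 : Z t₀ = 0)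
    (hY : ∀ t ∈ Ici t₀, Y t = w t + Z t)
    (hflat : ∀ s u, t₀ ≤ s → s ≤ u → (∀ rr ∈ Icc s u, a₀ < Y rr) → Z u = Z s)
    (ht : t₀ ≤ t) {M : ℝ} (hM : M ∈ upperBounds ((fun s => max (a₀ - w s) 0) '' Icc t₀ t)) :
    Z t ≤ M := by
  have hbound : ∀ s ∈ Icc t₀ t, a₀ - w s ≤ M ∧ 0 ≤ M := fun s hs =>
    max_le_iff.mp (hM (mem_image_of_mem _ hs))
  have hZcont' : ContinuousOn Z (Icc t₀ t) := hZcont.mono Icc_subset_Ici_self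
  have hclosed : IsClosed (Z ⁻¹' Iic M ∩ Icc t₀ t) := by
    rw [inter_comm]
    exact hZcont'.preimage_isClosed_of_isClosed isClosed_Icc isClosed_Iic
  have hstart : Z t₀ ≤ M := hZ0 ▸ (hbound t₀ (left_mem_Icc.mpr ht)).2
  refine hclosed.mem_of_ge_of_forall_exists_gt hstart ht ?_
  rintro x ⟨hZx, hx₀, hxt⟩
  by_contra! hempty
  have habove : ∀ y ∈ Ioc x t, M < Z y := fun y hy =>
    not_le.mp fun hZy => hempty.subset ⟨hZy, hy⟩
  have hYgt : ∀ y ∈ Ioc x t, a₀ < Y y := fun y hy => by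
    have hy₀ : t₀ ≤ y := hx₀.trans hy.1.le
    rw [hY y hy₀]
    linarith [habove y hy, (hbound y ⟨hy₀, hy.2⟩).1]
  have hconst : EqOn Z (fun _ => Z t) (Ioc x t) := fun y hy =>
    (hflat y t (hx₀.trans hy.1.le) hy.2 fun r hr => hYgt r ⟨hy.1.trans_le hr.1, hr.2⟩).symm
  have hZxt : Z x = Z t :=
    hconst.of_subset_closure (hZcont'.mono (Icc_subset_Icc_left hx₀)) continuousOn_const
      Ioc_subset_Icc_self (closure_Ioc hxt.ne).ge (left_mem_Icc.mpr hxt.le)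
  exact (habove t (right_mem_Ioc.mpr hxt)).not_ge (hZxt ▸ hZx)

end Skorokhod

theorem skorokhod_one_sided_explicit_general (t₀ a₀ : ℝ) (w Z Y : ℝ → ℝ)
    (hZcont : ContinuousOn Z (Set.Ici t₀))
    (hZmono : MonotoneOn Z (Set.Ici t₀)) (hZ0 : Z t₀ = 0)
    (hY : ∀ t ∈ Set.Ici t₀, Y t = w t + Z t)
    (hYge : ∀ t ∈ Set.Ici t₀, a₀ ≤ Y t)
    (hflat : ∀ s u, t₀ ≤ s → s ≤ u → (∀ rr ∈ Set.Icc s u, a₀ < Y rr) → Z u = Z s) :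
    ∀ t ∈ Set.Ici t₀, Z t = sSup ((fun s => max (a₀ - w s) 0) '' Set.Icc t₀ t) := by
  intro t ht
  have hlub : IsLUB ((fun s => max (a₀ - w s) 0) '' Icc t₀ t) (Z t) :=
    ⟨skorokhod_mem_upperBounds hZmono hZ0 hY hYge ht,
      fun _ hM => skorokhod_le_of_mem_upperBounds hZcont hZ0 hY hflat ht hM⟩
  exact (hlub.csSup_eq ((nonempty_Icc.mpr ht).image _)).symm

/-- Explicit solution of the one-sided Skorokhod reflection problem at a lower
boundary `a₀`. -/
theorem skorokhod_one_sided_explicit (t₀ a₀ : ℝ) (w Z Y : ℝ → ℝ)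
    (hw : ContinuousOn w (Set.Ici t₀)) (hw0 : w t₀ = a₀)
    (hZcont : ContinuousOn Z (Set.Ici t₀))
    (hZmono : MonotoneOn Z (Set.Ici t₀)) (hZ0 : Z t₀ = 0)
    (hY : ∀ t ∈ Set.Ici t₀, Y t = w t + Z t)
    (hYge : ∀ t ∈ Set.Ici t₀, a₀ ≤ Y t)
    (hflat : ∀ s u, t₀ ≤ s → s ≤ u → (∀ rr ∈ Set.Icc s u, a₀ < Y rr) → Z u = Z s) :
    ∀ t ∈ Set.Ici t₀, Z t = sSup ((fun s => max (a₀ - w s) 0) '' Set.Icc t₀ t) :=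
  skorokhod_one_sided_explicit_general t₀ a₀ w Z Y hZcont hZmono hZ0 hY hYge hflat
end
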